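/- arXiv:1511.01111 — 2 statements merged into one kernel-verified Lean document; each statement's English description precedes it below -/
import Mathlib

section
/- Let l be a symmetric norm on R^n, let v in S^{n-1} achieve l(v) = b_l, and let V have independent coordinates V_i ~ N(0, v_i^2). Then Pr(l(V) >= b_l/4) >= 1/10. -/
/-!
Regard `l` as a seminorm `p`. Since `p` is convex and invariant under taking absolute values
of coordinates, Jensen's inequality gives
`E p(V) ≥ p(E|V_1|, …, E|V_n|) = √(2/π) p(|v|) = √(2/π) b`.
Since `p x ≤ b ‖x‖₂`, also `E p(V)² ≤ b² E‖V‖₂² = b²`. Integrating the pointwise bound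
`p ≤ t + p² / (4c) + c · 1{t ≤ p}` (AM–GM on the event) with `t = b/4`, `c = 3b/2` leaves
`P(p(V) ≥ b/4) ≥ (√(2/π) - 5/12) · 2/3 ≥ 1/6`.
-/

open MeasureTheory ProbabilityTheory Real Set
open scoped ENNReal NNReal

lemma integral_Ioi_mul_exp_neg_mul_sq {b : ℝ} (hb : 0 < b) :
    ∫ x in Ioi 0, x * rexp (-b * x ^ 2) = (2 * b)⁻¹ := by
  have h := integral_mul_cexp_neg_mul_sq (b := (b : ℂ)) (by simpa using hb)
  rw [← Complex.ofReal_inj, ← integral_complex_ofReal]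
  push_cast
  simpa [Complex.ofReal_exp] using h

lemma integral_abs_mul_exp_neg_mul_sq {b : ℝ} (hb : 0 < b) :
    ∫ x, |x| * rexp (-b * x ^ 2) = b⁻¹ := by
  have h := integral_comp_abs (f := fun x => x * rexp (-b * x ^ 2))
  simp only [sq_abs] at h
  rw [h, integral_Ioi_mul_exp_neg_mul_sq hb]
  field_simp

lemma integral_abs_gaussianReal (v : ℝ≥0) :
    ∫ x, |x| ∂gaussianReal 0 v = √(2 * v / π) := by
  rcases eq_or_ne v 0 with rfl | hv
  · simp [gaussianReal_zero_var]
  have hv' : (0 : ℝ) < v := by positivity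
  have hpdf : ∀ x, gaussianPDFReal 0 v x • |x|
      = (√(2 * π * v))⁻¹ * (|x| * rexp (-(2 * v : ℝ)⁻¹ * x ^ 2)) := fun x => by
    simp only [gaussianPDFReal, sub_zero, smul_eq_mul]
    ring_nf
  simp_rw [integral_gaussianReal_eq_integral_smul hv, hpdf, integral_const_mul,
    integral_abs_mul_exp_neg_mul_sq (by positivity : (0 : ℝ) < (2 * v : ℝ)⁻¹), inv_inv]
  rw [eq_comm, Real.sqrt_eq_iff_mul_self_eq (by positivity) (by positivity)]
  field_simp
  rw [Real.sq_sqrt (by positivity)]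

lemma integral_abs_gaussianReal_toNNReal_sq (c : ℝ) :
    ∫ x, |x| ∂gaussianReal 0 (c ^ 2).toNNReal = √(2 / π) * |c| := by
  rw [integral_abs_gaussianReal, Real.coe_toNNReal _ (sq_nonneg _), mul_div_right_comm,
    Real.sqrt_mul (div_nonneg zero_le_two pi_pos.le), Real.sqrt_sq_eq_abs]

lemma integral_sq_gaussianReal (v : ℝ≥0) : ∫ x, x ^ 2 ∂gaussianReal 0 v = v := by
  rw [← variance_of_integral_eq_zero aemeasurable_id' integral_id_gaussianReal]
  exact variance_fun_id_gaussianReal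

lemma integral_le_add_div_add_mul_measureReal {Ω : Type*} [MeasurableSpace Ω] {P : Measure Ω}
    [IsProbabilityMeasure P] {f : Ω → ℝ} (hfm : Measurable f) (hf : MemLp f 2 P) {t c : ℝ}
    (ht : 0 ≤ t) (hc : 0 < c) :
    ∫ ω, f ω ∂P ≤ t + (∫ ω, f ω ^ 2 ∂P) / (4 * c) + c * P.real {ω | t ≤ f ω} := by
  set A := {ω | t ≤ f ω}
  have hA : MeasurableSet A := measurableSet_le measurable_const hfm
  have hpt : ∀ ω, f ω ≤ t + f ω ^ 2 / (4 * c) + A.indicator (fun _ => c) ω := by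
    intro ω
    have hsq : 0 ≤ f ω ^ 2 / (4 * c) := by positivity
    by_cases hω : ω ∈ A
    · have hamgm : f ω ≤ f ω ^ 2 / (4 * c) + c := by
        rw [div_add' _ _ _ (by positivity), le_div_iff₀ (by positivity)]
        nlinarith [sq_nonneg (f ω - 2 * c)]
      rw [indicator_of_mem hω]
      linarith
    · have hlt : f ω < t := lt_of_not_ge hω
      rw [indicator_of_notMem hω]
      linarith
  have hint_sq : Integrable (fun ω => f ω ^ 2 / (4 * c)) P := hf.integrable_sq.div_const _
  have hint_ind : Integrable (A.indicator fun _ => c) P := (integrable_const c).indicator hA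
  have hint_add : Integrable (fun ω => t + f ω ^ 2 / (4 * c)) P :=
    (integrable_const t).add hint_sq
  calc ∫ ω, f ω ∂P ≤ ∫ ω, t + f ω ^ 2 / (4 * c) + A.indicator (fun _ => c) ω ∂P :=
        integral_mono (hf.integrable one_le_two) (hint_add.add hint_ind) hpt
    _ = t + (∫ ω, f ω ^ 2 ∂P) / (4 * c) + c * P.real A := by
        rw [integral_add hint_add hint_ind,
          integral_add (integrable_const t) hint_sq, integral_const, integral_div,
          integral_indicator_const c hA]
        simp [smul_eq_mul, mul_comm]

lemma Seminorm.continuous_of_finiteDimensional {E : Type*} [NormedAddCommGroup E]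
    [NormedSpace ℝ E] [FiniteDimensional ℝ E] (p : Seminorm ℝ E) : Continuous p :=
  p.convexOn.locallyLipschitz.continuous

lemma Seminorm.memLp_comp {Ω E : Type*} [MeasurableSpace Ω] {P : Measure Ω}
    [NormedAddCommGroup E] [NormedSpace ℝ E] [FiniteDimensional ℝ E] (p : Seminorm ℝ E)
    {q : ℝ≥0∞} {X : Ω → E} (hX : MemLp X q P) : MemLp (fun ω => p (X ω)) q P := by
  have hp := p.continuous_of_finiteDimensional
  obtain ⟨C, -, hC⟩ := p.bound_of_continuous_normedSpace hp
  refine hX.of_le_mul (c := C) (hp.comp_aestronglyMeasurable hX.1) (ae_of_all _ fun ω => ?_)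
  rw [Real.norm_of_nonneg (apply_nonneg p _)]
  exact hC _

section Coordinates

variable {ι : Type*} [Fintype ι] (p : Seminorm ℝ (ι → ℝ))

lemma Seminorm.sq_le_sq_mul_sum_sq {b : ℝ} (hb : ∀ x : ι → ℝ, ∑ i, x i ^ 2 = 1 → p x ≤ b)
    (x : ι → ℝ) : p x ^ 2 ≤ b ^ 2 * ∑ i, x i ^ 2 := by
  set s := ∑ i, x i ^ 2
  rcases (Finset.sum_nonneg fun i _ => sq_nonneg (x i) : 0 ≤ s).eq_or_lt with hs | hs
  · have hx : x = 0 := funext fun i => pow_eq_zero_iff two_ne_zero |>.1 <|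
      (Finset.sum_eq_zero_iff_of_nonneg fun i _ => sq_nonneg (x i)).1 hs.symm i
        (Finset.mem_univ i)
    simp [s, hx]
  have hunit : ∑ i, ((√s)⁻¹ • x) i ^ 2 = 1 := by
    simp only [Pi.smul_apply, smul_eq_mul, mul_pow, ← Finset.mul_sum, inv_pow]
    rw [sq_sqrt hs.le]
    exact inv_mul_cancel₀ hs.ne'
  have hx : p x = √s * p ((√s)⁻¹ • x) := by
    rw [map_smul_eq_mul, norm_inv, Real.norm_of_nonneg (sqrt_nonneg s),
      mul_inv_cancel_left₀ (sqrt_pos.2 hs).ne']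
  calc p x ^ 2 = s * p ((√s)⁻¹ • x) ^ 2 := by rw [hx, mul_pow, sq_sqrt hs.le]
    _ ≤ s * b ^ 2 := by
        have := apply_nonneg p ((√s)⁻¹ • x)
        gcongr
        exact hb _ hunit
    _ = b ^ 2 * s := mul_comm _ _

variable {μ : ι → Measure ℝ} [∀ i, IsProbabilityMeasure (μ i)]

lemma memLp_id_pi {q : ℝ≥0∞} (h : ∀ i, MemLp id q (μ i)) : MemLp id q (Measure.pi μ) :=
  memLp_pi_iff.2 fun i => (h i).comp_measurePreserving (measurePreserving_eval μ i)

lemma Seminorm.integral_sq_le {b : ℝ} (hb : ∀ x : ι → ℝ, ∑ i, x i ^ 2 = 1 → p x ≤ b)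
    (h : ∀ i, MemLp id 2 (μ i)) :
    ∫ x, p x ^ 2 ∂Measure.pi μ ≤ b ^ 2 * ∑ i, ∫ y, y ^ 2 ∂μ i := by
  have hcoord : ∀ i, Integrable (fun x : ι → ℝ => x i ^ 2) (Measure.pi μ) := fun i =>
    ((h i).comp_measurePreserving (measurePreserving_eval μ i)).integrable_sq
  calc ∫ x, p x ^ 2 ∂Measure.pi μ ≤ ∫ x, b ^ 2 * ∑ i, x i ^ 2 ∂Measure.pi μ :=
        integral_mono (p.memLp_comp (memLp_id_pi h)).integrable_sq
          ((integrable_finsetSum _ fun i _ => hcoord i).const_mul _) (p.sq_le_sq_mul_sum_sq hb)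
    _ = b ^ 2 * ∑ i, ∫ y, y ^ 2 ∂μ i := by
        rw [integral_const_mul, integral_finsetSum _ fun i _ => hcoord i]
        exact congrArg _ <| Finset.sum_congr rfl fun i _ =>
          integral_comp_eval (f := fun y => y ^ 2) (continuous_pow 2).aestronglyMeasurable

lemma Seminorm.apply_integral_abs_le_integral (hsign : ∀ x, p (fun i => |x i|) = p x)
    (h : ∀ i, Integrable id (μ i)) :
    p (fun i => ∫ y, |y| ∂μ i) ≤ ∫ x, p x ∂Measure.pi μ := by
  have habs : ∀ i, Integrable (fun x : ι → ℝ => |x i|) (Measure.pi μ) := fun i =>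
    (integrable_eval (h i)).abs
  have hmean : (fun i => ∫ y, |y| ∂μ i) = ∫ x, (fun i => |x i|) ∂Measure.pi μ := by
    funext i
    rw [eval_integral habs]
    exact (integral_comp_eval (μ := μ) (i := i) continuous_abs.aestronglyMeasurable).symm
  have hp : Integrable p (Measure.pi μ) :=
    memLp_one_iff_integrable.1 <|
      p.memLp_comp (memLp_id_pi fun i => memLp_one_iff_integrable.2 (h i))
  calc p (fun i => ∫ y, |y| ∂μ i) ≤ ∫ x, p (fun i => |x i|) ∂Measure.pi μ := by
        rw [hmean]
        exact p.convexOn.map_integral_le p.continuous_of_finiteDimensional.continuousOn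
          isClosed_univ (ae_of_all _ fun _ => mem_univ _) (Integrable.of_eval habs)
          (hp.congr (ae_of_all _ fun x => (hsign x).symm))
    _ = ∫ x, p x ∂Measure.pi μ := by simp_rw [hsign]

end Coordinates

theorem tail_bound_norm_of_randomized_maximizer_general {n : ℕ} (l : (Fin n → ℝ) → ℝ)
    (htri : ∀ x y, l (x + y) ≤ l x + l y)
    (hhom : ∀ (c : ℝ) x, l (c • x) = |c| * l x)
    (hsign : ∀ x, l (fun i => |x i|) = l x)
    (b : ℝ) (hb : IsGreatest (l '' {x : Fin n → ℝ | ∑ i, (x i) ^ 2 = 1}) b)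
    (v : Fin n → ℝ) (hv : ∑ i, (v i) ^ 2 = 1) (hvb : l v = b) :
    (1 / 10 : ℝ≥0∞) ≤
      (Measure.pi fun i => gaussianReal 0 (Real.toNNReal ((v i) ^ 2))) {x | b / 4 ≤ l x} := by
  set p : Seminorm ℝ (Fin n → ℝ) := Seminorm.of l htri hhom
  set μ : Fin n → Measure ℝ := fun i => gaussianReal 0 (v i ^ 2).toNNReal
  have hμ : ∀ i, MemLp id 2 (μ i) := fun i => memLp_id_gaussianReal 2
  have hsphere : ∀ x : Fin n → ℝ, ∑ i, x i ^ 2 = 1 → p x ≤ b := fun x hx =>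
    hb.2 ⟨x, hx, rfl⟩
  rcases (hvb ▸ apply_nonneg p v : 0 ≤ b).eq_or_lt with rfl | hbpos
  · have hall : {x | 0 / 4 ≤ l x} = univ := eq_univ_of_forall fun x =>
      show 0 / 4 ≤ p x by rw [zero_div]; exact apply_nonneg p x
    rw [hall, measure_univ]
    norm_num
  have hmean : √(2 / π) * b ≤ ∫ x, p x ∂Measure.pi μ := calc
      √(2 / π) * b = p (√(2 / π) • fun i => |v i|) := by
        rw [map_smul_eq_mul, Real.norm_of_nonneg (sqrt_nonneg _)]
        exact congrArg _ (hsign v |>.trans hvb).symm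
      _ = p (fun i => ∫ y, |y| ∂μ i) :=
        congrArg p <| funext fun i => (integral_abs_gaussianReal_toNNReal_sq (v i)).symm
      _ ≤ _ := p.apply_integral_abs_le_integral hsign fun i => (hμ i).integrable one_le_two
  have hsecond : ∫ x, p x ^ 2 ∂Measure.pi μ ≤ b ^ 2 := by
    simpa [μ, integral_sq_gaussianReal, sq_nonneg, hv] using p.integral_sq_le hsphere hμ
  have htail := integral_le_add_div_add_mul_measureReal
    p.continuous_of_finiteDimensional.measurable (p.memLp_comp (memLp_id_pi hμ))
    (t := b / 4) (c := 3 * b / 2) (by positivity) (by positivity)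
  have hsqrt : 2 / 3 ≤ √(2 / π) :=
    Real.le_sqrt_of_sq_le (by rw [le_div_iff₀ pi_pos]; nlinarith [pi_le_four])
  have hprob : 1 / 10 ≤ (Measure.pi μ).real {x | b / 4 ≤ p x} := by
    have hquad : (∫ x, p x ^ 2 ∂Measure.pi μ) / (4 * (3 * b / 2)) ≤ b / 6 := by
      rw [div_le_iff₀ (by positivity)]; nlinarith
    nlinarith
  rw [← ofReal_measureReal]
  exact (ENNReal.ofReal_le_ofReal hprob).trans_eq' (by simp)

/-- If `v ∈ S^{n-1}` achieves the maximum `b` of a symmetric norm `l` on the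
unit sphere, and `V` has independent coordinates `V i ~ N(0, (v i)^2)`, then
`Pr(l V ≥ b/4) ≥ 1/10`. -/
theorem tail_bound_norm_of_randomized_maximizer {n : ℕ} (l : (Fin n → ℝ) → ℝ)
    (htri : ∀ x y, l (x + y) ≤ l x + l y)
    (hhom : ∀ (c : ℝ) x, l (c • x) = |c| * l x)
    (hdef : ∀ x, l x = 0 ↔ x = 0)
    (hperm : ∀ (σ : Equiv.Perm (Fin n)) x, l (fun i => x (σ i)) = l x)
    (hsign : ∀ x, l (fun i => |x i|) = l x)
    (b : ℝ) (hb : IsGreatest (l '' {x : Fin n → ℝ | ∑ i, (x i) ^ 2 = 1}) b)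
    (v : Fin n → ℝ) (hv : ∑ i, (v i) ^ 2 = 1) (hvb : l v = b) :
    (1 / 10 : ℝ≥0∞) ≤
      (Measure.pi fun i => gaussianReal 0 (Real.toNNReal ((v i) ^ 2))) {x | b / 4 ≤ l x} :=
  tail_bound_norm_of_randomized_maximizer_general l htri hhom hsign b hb v hv hvb
end

section
/- For the top-k norm Phi_k on R^n, there are absolute constants lambda_1, lambda_2 > 0 such that lambda_1 * k/sqrt(n) <= M_{Phi_k} <= lambda_2 * k * sqrt(log n)/sqrt(n), where M_{Phi_k} is the median of Phi_k over the uniform distribution on the Euclidean unit sphere S^{n-1}. -/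
open MeasureTheory Metric
open scoped ENNReal

/-!
Write `Φ_k` for the top-`k` norm. Lower bound: averaging over cyclic windows gives
`k ‖x‖₁ ≤ n Φ_k(x)`, and the cone over `{‖x‖₁ ≤ R}` on the sphere lies in the ℓ¹-ball of radius
`R`; comparing its volume `(2R)ⁿ / n!` with the cube of side `2 / √n` inside the Euclidean unit
ball and using `nⁿ ≤ eⁿ n!` bounds the measure by `(e R / √n)ⁿ`, which is below `1/2` for
`R = √n / 22`. Upper bound: `Φ_k(x) ≤ k ‖x‖_∞`, and the cone over `{|xᵢ| ≥ t}` lies in the ball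
of radius `s` and two caps of radius `√(1 - (s t)²)` around `± s t eᵢ`, so `{|xᵢ| ≥ t}` has
measure at most `sⁿ + 2 exp (-n (s t)² / 2)`; a union bound over the `n` coordinates with
`s = 1/4` and `t = 12 √(log n / n)` leaves less than `1/2`.
-/

/-- The uniform (Haar) probability measure on the unit Euclidean sphere in `ℝ^n`. -/
noncomputable def uniformSphere (n : ℕ) :
    Measure (sphere (0 : EuclideanSpace ℝ (Fin n)) 1) :=
  ((volume : Measure (EuclideanSpace ℝ (Fin n))).toSphere Set.univ)⁻¹ •
    (volume : Measure (EuclideanSpace ℝ (Fin n))).toSphere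

/-- The top-`k` norm on `ℝ^n`: the sum of the `k` largest coordinates of `x` in
absolute value. -/
noncomputable def topkNorm (n k : ℕ) (hk : k ≤ n) (x : Fin n → ℝ) : ℝ :=
  (Finset.univ.powersetCard k).sup'
    (Finset.powersetCard_nonempty.mpr (by simpa using hk))
    (fun S => ∑ i ∈ S, |x i|)

open Finset
open scoped Pointwise RealInnerProductSpace Nat

section TopkNorm

variable {n k : ℕ} (hk : k ≤ n) (x : Fin n → ℝ)

lemma sum_abs_le_topkNorm {S : Finset (Fin n)} (hS : #S = k) :
    ∑ i ∈ S, |x i| ≤ topkNorm n k hk x :=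
  le_sup' (fun S => ∑ i ∈ S, |x i|) (mem_powersetCard.mpr ⟨subset_univ S, hS⟩)

lemma topkNorm_le_of_forall_abs_le {t : ℝ} (ht : ∀ i, |x i| ≤ t) :
    topkNorm n k hk x ≤ k * t :=
  sup'_le _ _ fun S hS => by
    simpa [(mem_powersetCard.mp hS).2] using sum_le_card_nsmul S _ t fun i _ => ht i

/-- The `n` cyclic windows `{j, j + 1, …, j + k - 1}` cover every coordinate exactly `k` times. -/
lemma mul_sum_abs_le_mul_topkNorm : k * ∑ i, |x i| ≤ n * topkNorm n k hk x := by
  obtain rfl | hn := eq_or_ne n 0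
  · simp [Nat.le_zero.mp hk]
  have : NeZero n := ⟨hn⟩
  let window (j : Fin n) : Finset (Fin n) :=
    univ.map ⟨fun m : Fin k => j + Fin.castLE hk m,
      (add_right_injective j).comp (Fin.castLE_injective hk)⟩
  calc (k : ℝ) * ∑ i, |x i| = ∑ _m : Fin k, ∑ i, |x i| := by simp
    _ = ∑ m : Fin k, ∑ j, |x (j + Fin.castLE hk m)| :=
        sum_congr rfl fun m _ =>
          (Equiv.sum_comp (Equiv.addRight (Fin.castLE hk m)) fun i => |x i|).symm
    _ = ∑ j, ∑ i ∈ window j, |x i| := by rw [sum_comm]; simp [window]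
    _ ≤ ∑ _j : Fin n, topkNorm n k hk x :=
        sum_le_sum fun j _ => sum_abs_le_topkNorm hk x (by simp [window])
    _ = n * topkNorm n k hk x := by simp

end TopkNorm

section Volume

variable (ι : Type*) [Fintype ι]

lemma volume_setOf_sum_abs_le [Nonempty ι] {R : ℝ} (hR : 0 ≤ R) :
    volume {y : EuclideanSpace ℝ ι | ∑ i, |y i| ≤ R}
      = ENNReal.ofReal ((2 * R) ^ Fintype.card ι / (Fintype.card ι)!) := by
  have hmeas : MeasurableSet {x : ι → ℝ | ∑ i, |x i| ≤ R} :=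
    measurableSet_le (by fun_prop) measurable_const
  refine ((PiLp.volume_preserving_ofLp ι).measure_preimage hmeas.nullMeasurableSet).trans ?_
  have := volume_sum_rpow_le ι le_rfl R
  simp only [Real.rpow_one, div_one] at this
  rw [this, one_add_one_eq_two, Real.Gamma_two, Real.Gamma_nat_eq_factorial, mul_one,
    ← ENNReal.ofReal_pow hR, ← ENNReal.ofReal_mul (by positivity), mul_pow]
  ring_nf

lemma ofReal_two_div_sqrt_card_pow_le_volume_ball [Nonempty ι] :
    ENNReal.ofReal ((2 / √(Fintype.card ι)) ^ Fintype.card ι)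
      ≤ volume (ball (0 : EuclideanSpace ℝ ι) 1) := by
  have hcard : (0 : ℝ) < Fintype.card ι := by exact_mod_cast Fintype.card_pos
  have hcube : WithLp.ofLp ⁻¹' closedBall (0 : ι → ℝ) (1 / √(Fintype.card ι))
      ⊆ closedBall (0 : EuclideanSpace ℝ ι) 1 := by
    intro x hx
    rw [Set.mem_preimage, mem_closedBall_zero_iff, pi_norm_le_iff_of_nonneg (by positivity)] at hx
    rw [mem_closedBall_zero_iff, EuclideanSpace.norm_eq, Real.sqrt_le_one]
    calc ∑ i, ‖x i‖ ^ 2 ≤ ∑ _i : ι, (1 / √(Fintype.card ι)) ^ 2 := by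
          gcongr with i; exact hx i
      _ = 1 := by simp [hcard.ne']
  calc ENNReal.ofReal ((2 / √(Fintype.card ι)) ^ Fintype.card ι)
      = volume (closedBall (0 : ι → ℝ) (1 / √(Fintype.card ι))) := by
        rw [Real.volume_pi_closedBall _ (by positivity), mul_one_div]
    _ = volume (WithLp.ofLp ⁻¹' closedBall (0 : ι → ℝ) (1 / √(Fintype.card ι))) :=
        ((PiLp.volume_preserving_ofLp ι).measure_preimage
          measurableSet_closedBall.nullMeasurableSet).symm
    _ ≤ volume (closedBall (0 : EuclideanSpace ℝ ι) 1) := measure_mono hcube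
    _ = volume (ball (0 : EuclideanSpace ℝ ι) 1) :=
        Measure.addHaar_closedBall_eq_addHaar_ball _ _ _

end Volume

lemma uniformSphere_le_of_cone_subset {n : ℕ} (hn : n ≠ 0)
    {A : Set (sphere (0 : EuclideanSpace ℝ (Fin n)) 1)} (hA : MeasurableSet A)
    {S : Set (EuclideanSpace ℝ (Fin n))} (hS : Set.Ioo (0 : ℝ) 1 • ((↑) '' A) ⊆ S) :
    uniformSphere n A ≤ volume S / volume (ball (0 : EuclideanSpace ℝ (Fin n)) 1) := by
  rw [uniformSphere, Measure.smul_apply, smul_eq_mul, Measure.toSphere_apply_univ,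
    Measure.toSphere_apply' _ hA, finrank_euclideanSpace_fin, ← ENNReal.div_eq_inv_mul,
    ENNReal.mul_div_mul_left _ _ (by simpa using hn) (ENNReal.natCast_ne_top _)]
  exact ENNReal.div_le_div_right (measure_mono hS) _

lemma uniformSphere_setOf_sum_abs_le {n : ℕ} (hn : n ≠ 0) {R : ℝ} (hR : 0 ≤ R) :
    uniformSphere n {x | ∑ i, |(x : EuclideanSpace ℝ (Fin n)) i| ≤ R}
      ≤ ENNReal.ofReal ((Real.exp 1 * R / √n) ^ n) := by
  have : Nonempty (Fin n) := ⟨⟨0, Nat.pos_of_ne_zero hn⟩⟩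
  have hcone : Set.Ioo (0 : ℝ) 1 • (Subtype.val '' {x : sphere (0 : EuclideanSpace ℝ (Fin n)) 1 |
        ∑ i, |(x : EuclideanSpace ℝ (Fin n)) i| ≤ R})
      ⊆ {y : EuclideanSpace ℝ (Fin n) | ∑ i, |y i| ≤ R} := by
    rintro _ ⟨r, hr, _, ⟨x, hx, rfl⟩, rfl⟩
    simp only [Set.mem_ofPred_eq, PiLp.smul_apply, smul_eq_mul, abs_mul, abs_of_pos hr.1,
      ← mul_sum] at hx ⊢
    nlinarith [hr.2, sum_nonneg fun i (_ : i ∈ univ) =>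
      abs_nonneg ((x : EuclideanSpace ℝ (Fin n)) i)]
  have hn' : (0 : ℝ) < n := by positivity
  calc _ ≤ volume {y : EuclideanSpace ℝ (Fin n) | ∑ i, |y i| ≤ R} / volume (ball 0 1) :=
        uniformSphere_le_of_cone_subset hn (measurableSet_le (by fun_prop) measurable_const) hcone
    _ ≤ ENNReal.ofReal ((2 * R) ^ n / n !) / ENNReal.ofReal ((2 / √n) ^ n) := by
        gcongr
        · simpa using (volume_setOf_sum_abs_le (Fin n) hR).le
        · simpa using ofReal_two_div_sqrt_card_pow_le_volume_ball (Fin n)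
    _ = ENNReal.ofReal ((R / √n) ^ n * (n ^ n / n !)) := by
        rw [← ENNReal.ofReal_div_of_pos (by positivity)]
        congr 1
        field_simp
        rw [← mul_pow, ← mul_pow, div_mul_div_comm, ← sq, Real.sq_sqrt hn'.le]
        field_simp
    _ ≤ ENNReal.ofReal ((R / √n) ^ n * Real.exp 1 ^ n) := by
        gcongr
        simpa [← Real.exp_nat_mul] using Real.pow_div_factorial_le_exp (n : ℝ) hn'.le n
    _ = ENNReal.ofReal ((Real.exp 1 * R / √n) ^ n) := by rw [← mul_pow]; ring_nf

lemma ofReal_lt_one_half {q : ℝ} (hq : q < 1 / 2) : ENNReal.ofReal q < 1 / 2 := by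
  simpa using ENNReal.ofReal_lt_ofReal_iff'.mpr ⟨hq, one_half_pos⟩

lemma median_topkNorm_ge {n k : ℕ} (hn : n ≠ 0) (hk : k ≤ n) {M : ℝ}
    (h : (1 / 2 : ℝ≥0∞) ≤
      uniformSphere n {x | topkNorm n k hk (fun i => (x : EuclideanSpace ℝ (Fin n)) i) ≤ M}) :
    1 / 22 * k / √n ≤ M := by
  by_contra! hM
  have hn' : (0 : ℝ) < n := by positivity
  have hsub : {x : sphere (0 : EuclideanSpace ℝ (Fin n)) 1 |
      topkNorm n k hk (fun i => (x : EuclideanSpace ℝ (Fin n)) i) ≤ M}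
      ⊆ {x | ∑ i, |(x : EuclideanSpace ℝ (Fin n)) i| ≤ √n / 22} := by
    intro x hx
    refine (lt_of_mul_lt_mul_left ?_ (Nat.cast_nonneg (α := ℝ) k)).le
    calc (k : ℝ) * ∑ i, |(x : EuclideanSpace ℝ (Fin n)) i|
        ≤ n * topkNorm n k hk (fun i => (x : EuclideanSpace ℝ (Fin n)) i) :=
          mul_sum_abs_le_mul_topkNorm hk _
      _ ≤ n * M := by gcongr; exact hx
      _ < n * (1 / 22 * k / √n) := by gcongr
      _ = k * (√n / 22) := by
          field_simp
          rw [Real.sq_sqrt hn'.le, mul_comm]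
  have hsmall : (Real.exp 1 * (√n / 22) / √n) ^ n < 1 / 2 :=
    calc (Real.exp 1 * (√n / 22) / √n) ^ n = (Real.exp 1 / 22) ^ n := by
          field_simp
      _ ≤ Real.exp 1 / 22 := pow_le_of_le_one (by positivity)
          (by linarith [Real.exp_one_lt_d9]) hn
      _ < 1 / 2 := by linarith [Real.exp_one_lt_d9]
  have hle := (measure_mono hsub).trans (uniformSphere_setOf_sum_abs_le hn (by positivity))
  exact (h.trans hle).not_gt (ofReal_lt_one_half hsmall)

lemma dist_le_sqrt_one_sub_sq_of_le_inner {E : Type*} [NormedAddCommGroup E]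
    [InnerProductSpace ℝ E] {u y : E} {c : ℝ} (hu : ‖u‖ = 1) (hy : ‖y‖ ≤ 1) (hc : 0 ≤ c)
    (hcy : c ≤ ⟪y, u⟫) : dist y (c • u) ≤ √(1 - c ^ 2) := by
  rw [dist_eq_norm, ← Real.sqrt_sq (norm_nonneg _)]
  refine Real.sqrt_le_sqrt ?_
  rw [norm_sub_sq_real, inner_smul_right, norm_smul, hu, Real.norm_eq_abs, abs_of_nonneg hc]
  nlinarith [norm_nonneg y]

lemma sqrt_one_sub_sq_pow_le_exp (c : ℝ) (n : ℕ) :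
    √(1 - c ^ 2) ^ n ≤ Real.exp (-(n * c ^ 2 / 2)) := by
  have h : √(1 - c ^ 2) ≤ Real.exp (-(c ^ 2) / 2) := by
    rw [Real.exp_half]
    exact Real.sqrt_le_sqrt (by linarith [Real.add_one_le_exp (-(c ^ 2))])
  calc √(1 - c ^ 2) ^ n ≤ Real.exp (-(c ^ 2) / 2) ^ n := by gcongr
    _ = Real.exp (-(n * c ^ 2 / 2)) := by rw [← Real.exp_nat_mul]; ring_nf

lemma mem_closedBall_union_of_le_abs_apply {n : ℕ} {y : EuclideanSpace ℝ (Fin n)} {c : ℝ}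
    (i : Fin n) (hy : ‖y‖ ≤ 1) (hc : 0 ≤ c) (hcy : c ≤ |y i|) :
    y ∈ closedBall (c • EuclideanSpace.single i 1) (√(1 - c ^ 2)) ∪
      closedBall (c • -EuclideanSpace.single i 1) (√(1 - c ^ 2)) := by
  have he : ‖EuclideanSpace.single i (1 : ℝ)‖ = 1 := by simp
  rcases le_abs.mp hcy with h | h
  · exact .inl <| dist_le_sqrt_one_sub_sq_of_le_inner he hy hc <| by
      simpa [EuclideanSpace.inner_single_right] using h
  · exact .inr <| dist_le_sqrt_one_sub_sq_of_le_inner (by rwa [norm_neg]) hy hc <| by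
      simpa [EuclideanSpace.inner_single_right] using h

lemma uniformSphere_setOf_le_abs_apply {n : ℕ} (hn : n ≠ 0) (i : Fin n) {s t : ℝ}
    (hs : 0 ≤ s) (ht : 0 ≤ t) :
    uniformSphere n {x | t ≤ |(x : EuclideanSpace ℝ (Fin n)) i|}
      ≤ ENNReal.ofReal (s ^ n + 2 * Real.exp (-(n * (s * t) ^ 2 / 2))) := by
  set e := EuclideanSpace.single i (1 : ℝ)
  set ρ := √(1 - (s * t) ^ 2)
  set B := volume (ball (0 : EuclideanSpace ℝ (Fin n)) 1)
  set caps := closedBall ((s * t) • e) ρ ∪ closedBall ((s * t) • -e) ρ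
  have hcone : Set.Ioo (0 : ℝ) 1 • (Subtype.val '' {x : sphere (0 : EuclideanSpace ℝ (Fin n)) 1 |
        t ≤ |(x : EuclideanSpace ℝ (Fin n)) i|})
      ⊆ closedBall 0 s ∪ caps := by
    rintro _ ⟨r, hr, _, ⟨x, hx, rfl⟩, rfl⟩
    have hnorm : ‖r • (x : EuclideanSpace ℝ (Fin n))‖ = r := by
      simp [norm_smul, abs_of_pos hr.1]
    rcases le_or_gt r s with hrs | hrs
    · exact .inl (by simpa [hnorm] using hrs)
    · refine .inr <| mem_closedBall_union_of_le_abs_apply i (hnorm.trans_le hr.2.le)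
        (by positivity) ?_
      rw [PiLp.smul_apply, smul_eq_mul, abs_mul, abs_of_pos hr.1]
      exact mul_le_mul hrs.le hx ht hr.1.le
  have hball (z : EuclideanSpace ℝ (Fin n)) {r : ℝ} (hr : 0 ≤ r) :
      volume (closedBall z r) = ENNReal.ofReal (r ^ n) * B := by
    rw [Measure.addHaar_closedBall _ _ hr, finrank_euclideanSpace_fin]
  calc _ ≤ volume (closedBall 0 s ∪ caps) / B :=
        uniformSphere_le_of_cone_subset hn (measurableSet_le (by fun_prop) (by fun_prop)) hcone
    _ ≤ (ENNReal.ofReal (s ^ n) + (ENNReal.ofReal (ρ ^ n) + ENNReal.ofReal (ρ ^ n))) * B / B := by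
        gcongr
        refine ((measure_union_le _ _).trans
          (add_le_add le_rfl (measure_union_le _ _))).trans_eq ?_
        rw [hball _ hs, hball _ (Real.sqrt_nonneg _), hball _ (Real.sqrt_nonneg _)]
        ring
    _ = ENNReal.ofReal (s ^ n + 2 * ρ ^ n) := by
        rw [ENNReal.mul_div_cancel_right (measure_ball_pos _ _ one_pos).ne' measure_ball_lt_top.ne,
          ← ENNReal.ofReal_add (by positivity) (by positivity),
          ← ENNReal.ofReal_add (by positivity) (by positivity), two_mul]
    _ ≤ _ := by
        gcongr
        exact sqrt_one_sub_sq_pow_le_exp _ _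

lemma natCast_mul_add_two_mul_exp_lt_one_half {n : ℕ} (hn : 2 ≤ n) :
    (n : ℝ) * ((1 / 4) ^ n + 2 * Real.exp (-(n * (1 / 4 * (12 * √(Real.log n) / √n)) ^ 2 / 2)))
      < 1 / 2 := by
  have hn' : (2 : ℝ) ≤ n := by exact_mod_cast hn
  have hL : 0 ≤ Real.log n := Real.log_nonneg (by linarith)
  have hsq : (1 / 4 * (12 * √(Real.log n) / √n)) ^ 2 = 9 * Real.log n / n := by
    simp only [mul_pow, div_pow, Real.sq_sqrt hL, Real.sq_sqrt (by linarith : (0 : ℝ) ≤ n)]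
    ring
  have hexp : Real.exp (4 * Real.log n) = n ^ 4 := by
    rw [show (4 : ℝ) * Real.log n = (4 : ℕ) * Real.log n by norm_num, Real.exp_nat_mul,
      Real.exp_log (by linarith)]
  have h₁ : (n : ℝ) * (1 / 4) ^ n < 1 / 4 :=
    calc (n : ℝ) * (1 / 4) ^ n < 2 ^ n * (1 / 4) ^ n := by
          gcongr; exact_mod_cast Nat.lt_two_pow_self
      _ = (1 / 2) ^ n := by rw [← mul_pow]; norm_num
      _ ≤ (1 / 2) ^ 2 := pow_le_pow_of_le_one (by norm_num) (by norm_num) hn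
      _ = 1 / 4 := by norm_num
  have h₂ : (n : ℝ) * (2 * Real.exp (-(n * (1 / 4 * (12 * √(Real.log n) / √n)) ^ 2 / 2)))
      ≤ 1 / 4 :=
    calc (n : ℝ) * (2 * Real.exp (-(n * (1 / 4 * (12 * √(Real.log n) / √n)) ^ 2 / 2)))
        = n * (2 * Real.exp (-(9 / 2 * Real.log n))) := by
          rw [hsq]; field_simp
      _ ≤ n * (2 * Real.exp (-(4 * Real.log n))) := by gcongr; linarith
      _ = 2 / n ^ 3 := by rw [Real.exp_neg, hexp]; field_simp
      _ ≤ 1 / 4 := by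
          rw [div_le_div_iff₀ (by positivity) (by norm_num)]
          nlinarith [pow_le_pow_left₀ (by norm_num) hn' 3]
  linarith

lemma median_topkNorm_le {n k : ℕ} (hn : 2 ≤ n) (hk : k ≤ n) {M : ℝ}
    (h : (1 / 2 : ℝ≥0∞) ≤
      uniformSphere n {x | M ≤ topkNorm n k hk (fun i => (x : EuclideanSpace ℝ (Fin n)) i)}) :
    M ≤ 12 * k * √(Real.log n) / √n := by
  by_contra! hM
  set t := 12 * √(Real.log n) / √n
  have hsub : {x : sphere (0 : EuclideanSpace ℝ (Fin n)) 1 |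
      M ≤ topkNorm n k hk (fun i => (x : EuclideanSpace ℝ (Fin n)) i)}
      ⊆ ⋃ i, {x | t ≤ |(x : EuclideanSpace ℝ (Fin n)) i|} := by
    intro x hx
    by_contra hx'
    simp only [Set.mem_iUnion, Set.mem_ofPred_eq, not_exists, not_le] at hx hx'
    have := topkNorm_le_of_forall_abs_le hk _ fun i => (hx' i).le
    linarith [show (k : ℝ) * t = 12 * k * √(Real.log n) / √n by ring]
  have hn0 : n ≠ 0 := by omega
  refine (ofReal_lt_one_half (natCast_mul_add_two_mul_exp_lt_one_half hn)).not_ge ?_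
  calc (1 / 2 : ℝ≥0∞)
      ≤ ∑ i : Fin n, uniformSphere n {x | t ≤ |(x : EuclideanSpace ℝ (Fin n)) i|} :=
        h.trans ((measure_mono hsub).trans (measure_iUnion_fintype_le _ _))
    _ ≤ ∑ _i : Fin n, ENNReal.ofReal ((1 / 4) ^ n + 2 * Real.exp (-(n * (1 / 4 * t) ^ 2 / 2))) :=
        sum_le_sum fun i _ =>
          uniformSphere_setOf_le_abs_apply hn0 i (by norm_num) (by positivity)
    _ = ENNReal.ofReal (n * ((1 / 4) ^ n + 2 * Real.exp (-(n * (1 / 4 * t) ^ 2 / 2)))) := by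
        rw [sum_const, card_univ, Fintype.card_fin, nsmul_eq_mul,
          ENNReal.ofReal_mul (by positivity), ENNReal.ofReal_natCast]

/-- There are absolute constants `λ₁, λ₂ > 0` such that for all `n ≥ 2` and
`1 ≤ k ≤ n`, any median `M` of the top-`k` norm over the uniform measure on
`S^{n-1}` satisfies `λ₁ k/√n ≤ M ≤ λ₂ k √(log n)/√n`. -/
theorem median_topk_on_sphere :
    ∃ lam₁ lam₂ : ℝ, 0 < lam₁ ∧ 0 < lam₂ ∧
      ∀ n k : ℕ, 2 ≤ n → 1 ≤ k → ∀ hk : k ≤ n, ∀ M : ℝ,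
      (1 / 2 : ℝ≥0∞) ≤
        uniformSphere n {x | topkNorm n k hk (fun i => (x : EuclideanSpace ℝ (Fin n)) i) ≤ M} →
      (1 / 2 : ℝ≥0∞) ≤
        uniformSphere n {x | M ≤ topkNorm n k hk (fun i => (x : EuclideanSpace ℝ (Fin n)) i)} →
      lam₁ * k / Real.sqrt n ≤ M ∧
        M ≤ lam₂ * k * Real.sqrt (Real.log n) / Real.sqrt n :=
  ⟨1 / 22, 12, by norm_num, by norm_num, fun _ _ hn _ hk _ h₁ h₂ =>
    ⟨median_topkNorm_ge (by omega) hk h₁, median_topkNorm_le hn hk h₂⟩⟩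
end
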